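/- arXiv:0906.3145 — 5 statements merged into one kernel-verified Lean document; each statement's English description precedes it below -/
import Mathlib

section
/- Let A be a finite-dimensional local self-injective k-algebra whose socle (as a left A-module, equal to the socle of A as a bimodule) is one-dimensional, spanned by an element u, and assume every projective A-module is free. If M is a finitely generated A-module with dim_k(uM) = r, then M is isomorphic to A^r ⊕ N where N is an A-module with uN = 0 (in particular, N has no projective submodules). -/
/-!
Choose `m₁, …, m_r ∈ M` such that the `u • mᵢ` form a `k`-basis of `u • M`, and let
`φ : Aʳ → M` send `a` to `∑ aᵢ • mᵢ`. Every nonzero submodule of the artinian module `Aʳ`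
contains a nonzero vector killed by all nonunits, i.e. a vector `(cᵢ • u)` with coordinates in
the socle; `φ` sends it to `∑ cᵢ • u • mᵢ ≠ 0`, so `φ` is injective. As `Aʳ` is an injective
module, `φ` splits, `M ≅ Aʳ × M ⧸ φ(Aʳ)`, and `u` kills the quotient because `u • M ⊆ φ(Aʳ)`.
-/

open Function Submodule

section LocalRing

variable {A V : Type*} [Ring A] [IsLocalRing A] [IsDedekindFiniteMonoid A]
  [AddCommGroup V] [Module A V]

theorem IsLocalRing.eq_zero_of_mem_span_nonunit_smul {x : A} (hx : ¬IsUnit x) {b : V}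
    (hb : b ∈ span A {x • b}) : b = 0 := by
  obtain ⟨y, hy⟩ := mem_span_singleton.mp hb
  have hunit : IsUnit (1 - y * x) :=
    (IsLocalRing.isUnit_or_isUnit_of_add_one (add_sub_cancel _ _)).resolve_left
      fun h ↦ hx (isUnit_of_mul_isUnit_right h)
  rw [← hunit.smul_eq_zero, sub_smul, one_smul, mul_smul, hy, sub_self]

theorem IsAtom.nonunit_smul_eq_zero {N : Submodule A V} (hN : IsAtom N) {b : V} (hb : b ∈ N)
    {x : A} (hx : ¬IsUnit x) : x • b = 0 := by
  by_contra hxb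
  have hspan : span A {x • b} = N :=
    (hN.le_iff.mp (span_singleton_le_iff_mem _ _ |>.mpr (N.smul_mem x hb))).resolve_left
      (by simpa using hxb)
  have hb0 : b = 0 := IsLocalRing.eq_zero_of_mem_span_nonunit_smul hx (hspan ▸ hb)
  exact hxb (by rw [hb0, smul_zero])

theorem Submodule.exists_mem_ne_zero_forall_nonunit_smul_eq_zero [IsArtinian A V]
    {K : Submodule A V} (hK : K ≠ ⊥) :
    ∃ b ∈ K, b ≠ 0 ∧ ∀ x : A, ¬IsUnit x → x • b = 0 := by
  obtain ⟨N, hN, hNK⟩ := (eq_bot_or_exists_atom_le K).resolve_left hK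
  obtain ⟨b, hb, hb0⟩ := exists_mem_ne_zero_of_ne_bot hN.1
  exact ⟨b, hNK hb, hb0, fun x hx ↦ hN.nonunit_smul_eq_zero hb hx⟩

theorem LinearMap.injective_of_forall_nonunit_smul_eq_zero {W : Type*} [AddCommGroup W]
    [Module A W] [IsArtinian A V] (f : V →ₗ[A] W)
    (h : ∀ b, (∀ x : A, ¬IsUnit x → x • b = 0) → f b = 0 → b = 0) : Injective f := by
  rw [← ker_eq_bot]
  by_contra hker
  obtain ⟨b, hb, hb0, hsoc⟩ := exists_mem_ne_zero_forall_nonunit_smul_eq_zero hker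
  exact hb0 (h b hsoc hb)

end LocalRing

universe v in
theorem Module.Injective.nonempty_linearEquiv_prod_quotient_range {A : Type*} {P M : Type v}
    [Ring A] [AddCommGroup P] [Module A P] [AddCommGroup M] [Module A M] [Module.Injective A P]
    (φ : P →ₗ[A] M) (hφ : Function.Injective φ) :
    Nonempty (M ≃ₗ[A] P × (M ⧸ LinearMap.range φ)) := by
  obtain ⟨ρ, hρ⟩ := Module.Injective.out φ hφ LinearMap.id
  exact ⟨(φ.exact_map_mkQ_range.splitInjectiveEquiv (mkQ_surjective _)
    ⟨ρ, LinearMap.ext hρ⟩).1⟩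

theorem LinearMap.exists_linearIndependent_range_le_span {k M W : Type*} [Field k]
    [AddCommGroup M] [Module k M] [AddCommGroup W] [Module k W] (f : M →ₗ[k] W)
    [FiniteDimensional k (LinearMap.range f)] {r : ℕ}
    (hr : Module.finrank k (LinearMap.range f) = r) :
    ∃ m : Fin r → M, LinearIndependent k (f ∘ m) ∧
      LinearMap.range f ≤ span k (Set.range (f ∘ m)) := by
  let v := Module.finBasisOfFinrankEq k (LinearMap.range f) hr
  choose m hm using fun i ↦ (v i).2
  have hfm : f ∘ m = (LinearMap.range f).subtype ∘ v := funext hm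
  refine ⟨m, ?_, fun w hw ↦ ?_⟩
  · rw [hfm]
    exact v.linearIndependent.map' _ (ker_subtype _)
  refine (mem_span_range_iff_exists_fun k).mpr ⟨v.repr ⟨w, hw⟩, ?_⟩
  rw [hfm]
  simpa only [coe_subtype, Function.comp_apply, AddSubmonoidClass.coe_finsetSum, SetLike.val_smul]
    using congrArg Subtype.val (v.sum_repr ⟨w, hw⟩)

theorem stmt_1_general (k : Type) [Field k] (A : Type) [Ring A] [Algebra k A]
    [FiniteDimensional k A] [IsLocalRing A]
    (hselfinj : Module.Injective A A)
    (u : A)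
    (hsocle : ∀ x : A, (∀ a : A, ¬ IsUnit a → a * x = 0) ↔ ∃ c : k, x = c • u)
    (M : Type) [AddCommGroup M] [Module A M] [Module k M] [IsScalarTower k A M]
    [Module.Finite A M] (r : ℕ)
    (hr : Module.finrank k (Submodule.span k (Set.range fun m : M => u • m)) = r) :
    ∃ (N : Type) (_ : AddCommGroup N) (_ : Module A N),
      (∀ x : N, u • x = 0) ∧ Nonempty (M ≃ₗ[A] (Fin r → A) × N) := by
  have : IsArtinianRing A := .of_finite k A
  have : Module.Finite k M := .trans A M
  let ℓ : M →ₗ[k] M := DistribSMul.toLinearMap k M u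
  have hℓ : LinearMap.range ℓ = span k (Set.range fun m : M => u • m) :=
    (span_eq (LinearMap.range ℓ)).symm
  obtain ⟨m, hli, hspan⟩ := ℓ.exists_linearIndependent_range_le_span (hℓ ▸ hr)
  let φ := Fintype.linearCombination A m
  have hφ (c : Fin r → k) : φ (fun i ↦ c i • u) = ∑ i, c i • u • m i := by
    simp [φ, Fintype.linearCombination_apply, smul_assoc]
  have hinj : Injective φ := φ.injective_of_forall_nonunit_smul_eq_zero fun b hb hφb ↦ by
    choose c hc using fun i ↦ (hsocle (b i)).mp fun x hx ↦ congrFun (hb x hx) i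
    obtain rfl : b = fun i ↦ c i • u := funext hc
    have hc0 := Fintype.linearIndependent_iff.mp hli c ((hφ c).symm.trans hφb)
    ext i
    simp [hc0]
  refine ⟨_, _, _, ?_, Module.Injective.nonempty_linearEquiv_prod_quotient_range φ hinj⟩
  intro x
  obtain ⟨x, rfl⟩ := mkQ_surjective _ x
  rw [← map_smul, mkQ_apply, Quotient.mk_eq_zero]
  obtain ⟨c, hc⟩ := (mem_span_range_iff_exists_fun k).mp (hspan ⟨x, rfl⟩)
  exact ⟨_, (hφ c).trans hc⟩

/-- Let `A` be a finite-dimensional local self-injective `k`-algebra whose socle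
(the set of elements killed by all nonunits) is one-dimensional, spanned by `u`,
and assume every projective `A`-module is free.  If `M` is a finitely generated
`A`-module with `dim_k (u • M) = r`, then `M ≅ A^r ⊕ N` where `u • N = 0`. -/
theorem stmt_1 (k : Type) [Field k] (A : Type) [Ring A] [Algebra k A]
    [FiniteDimensional k A] [IsLocalRing A]
    (hselfinj : Module.Injective A A)
    (u : A) (hu : u ≠ 0)
    (hsocle : ∀ x : A, (∀ a : A, ¬ IsUnit a → a * x = 0) ↔ ∃ c : k, x = c • u)
    (hprojfree : ∀ (P : Type) [AddCommGroup P] [Module A P],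
      Module.Projective A P → Module.Free A P)
    (M : Type) [AddCommGroup M] [Module A M] [Module k M] [IsScalarTower k A M]
    [Module.Finite A M] (r : ℕ)
    (hr : Module.finrank k (Submodule.span k (Set.range fun m : M => u • m)) = r) :
    ∃ (N : Type) (_ : AddCommGroup N) (_ : Module A N),
      (∀ x : N, u • x = 0) ∧ Nonempty (M ≃ₗ[A] (Fin r → A) × N) :=
  stmt_1_general k A hselfinj u hsocle M r hr
end

section
/- Let A be an associative k-algebra generated by u_1, …, u_n (n > 1) such that u_i^p = 0 for all i, the image of u_i is central in A/I_i where I_i is the two-sided ideal generated by u_{i+1}, …, u_n, u_n is central in A, and dim_k A = p^n. Then the set of ordered monomials { u_1^{i_1} u_2^{i_2} ⋯ u_n^{i_n} : 0 ≤ i_j < p } is a k-basis of A. -/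
/-!
Let `J i` be the ideal generated by `u i, …, u (n-1)` and `W i` the span of the ordered
monomials in `u 0, …, u (i-1)` with exponents `< p`. By induction `A = W i + J i`: since `u i`
is central modulo `J (i+1)`, we have `J i = A u i + J (i+1)`, and substituting
`A = W i + A u i + J (i+1)` into itself `p` times gives
`A = ∑_{e<p} W i u i^e + A u i^p + J (i+1) = W (i+1) + J (i+1)`.
At `i = n` the `p^n` ordered monomials span `A`, and `dim A = p^n` makes them a basis.
-/

open Submodule

theorem Ideal.isTwoSided_span_of_mul_mem {R : Type*} [Semiring R] {s : Set R}
    (hs : ∀ x ∈ s, ∀ b, x * b ∈ s) : (Ideal.span s).IsTwoSided := by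
  refine ⟨fun b hx => ?_⟩
  induction hx using Submodule.span_induction with
  | mem x hx => exact Ideal.subset_span (hs x hx b)
  | zero => rw [zero_mul]; exact zero_mem _
  | add x y _ _ hx hy => rw [add_mul]; exact add_mem hx hy
  | smul r x _ hx => rw [smul_eq_mul, mul_assoc]; exact Ideal.mul_mem_left _ r hx

section Absorption

variable {k A : Type*} [CommRing k] [Ring A] [Algebra k A]

theorem top_le_iSup_map_mulRight_pow_sup {W : Submodule k A} {J : Ideal A} [J.IsTwoSided]
    {x : A} {p : ℕ} (hx : x ^ p = 0)
    (h : ⊤ ≤ W ⊔ (Ideal.span {x} ⊔ J).restrictScalars k) :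
    ⊤ ≤ (⨆ e < p, W.map (LinearMap.mulRight k (x ^ e))) ⊔ J.restrictScalars k := by
  set R : ℕ → A →ₗ[k] A := fun e => LinearMap.mulRight k (x ^ e)
  have hJ : ∀ e, (J.restrictScalars k).map (R e) ≤ J.restrictScalars k := by
    rintro e _ ⟨a, ha, rfl⟩
    exact Ideal.mul_mem_right _ J ha
  have hspan : (Ideal.span {x}).restrictScalars k = LinearMap.range (R 1) := by
    ext a
    simp [R, Ideal.mem_span_singleton']
  have hmap : ∀ m, LinearMap.range (R m) ≤
      W.map (R m) ⊔ LinearMap.range (R (m + 1)) ⊔ J.restrictScalars k := by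
    intro m
    have hcomp : (R m).comp (R 1) = R (m + 1) := by
      simp only [R]
      rw [← LinearMap.mulRight_mul, pow_one, ← pow_succ']
    calc LinearMap.range (R m) = (⊤ : Submodule k A).map (R m) := LinearMap.range_eq_map _
      _ ≤ (W ⊔ LinearMap.range (R 1) ⊔ J.restrictScalars k).map (R m) := by
        gcongr
        simpa [hspan, sup_assoc] using h
      _ ≤ _ := by
        rw [Submodule.map_sup, Submodule.map_sup, ← LinearMap.range_comp, hcomp]
        exact sup_le_sup_left (hJ m) _
  suffices key : ∀ m,
      ⊤ ≤ (⨆ e < m, W.map (R e)) ⊔ LinearMap.range (R m) ⊔ J.restrictScalars k by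
    simpa [R, hx] using key p
  intro m
  induction m with
  | zero => simp [R]
  | succ m ih =>
    rw [Nat.iSup_lt_succ]
    refine ih.trans (sup_le (sup_le (le_sup_left.trans (le_sup_left.trans le_sup_left)) ?_)
      le_sup_right)
    exact (hmap m).trans (by gcongr; exact le_sup_right)

end Absorption

section Monomials

variable {A : Type*} [Monoid A] {n : ℕ} (u : Fin n → A)

def truncMonomial (e : Fin n → ℕ) (i : ℕ) : A :=
  (((List.finRange n).map fun j => u j ^ e j).take i).prod

@[simp]
theorem truncMonomial_zero (e : Fin n → ℕ) : truncMonomial u e 0 = 1 := by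
  simp [truncMonomial]

theorem truncMonomial_of_le (e : Fin n → ℕ) {i : ℕ} (hi : n ≤ i) :
    truncMonomial u e i = ((List.finRange n).map fun j => u j ^ e j).prod := by
  rw [truncMonomial, List.take_of_length_le (by simpa using hi)]

theorem truncMonomial_succ (e : Fin n → ℕ) (i : Fin n) :
    truncMonomial u e (i + 1) = truncMonomial u e i * u i ^ e i := by
  rw [truncMonomial, List.prod_take_succ _ _ (by simp)]
  simp [truncMonomial]

theorem truncMonomial_congr {e e' : Fin n → ℕ} {i : ℕ}
    (h : ∀ j : Fin n, (j : ℕ) < i → e j = e' j) :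
    truncMonomial u e i = truncMonomial u e' i := by
  simp only [truncMonomial, ← List.map_take]
  congr 1
  refine List.map_congr_left fun j hj => ?_
  obtain ⟨m, hm, rfl⟩ := List.mem_iff_getElem.1 hj
  rw [h _ (by simp at hm ⊢; omega)]

end Monomials

section MonomialSpan

variable (k : Type*) {A : Type*} [CommSemiring k] [Semiring A] [Algebra k A] {n : ℕ}
  (u : Fin n → A) (p : ℕ)

def monomialSpan (i : ℕ) : Submodule k A :=
  span k (Set.range fun f : Fin n → Fin p => truncMonomial u (fun j => f j) i)

theorem one_le_monomialSpan_zero (hp : 0 < p) : 1 ≤ monomialSpan k u p 0 := by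
  rw [one_eq_span, span_le, Set.singleton_subset_iff]
  exact subset_span ⟨fun _ => ⟨0, hp⟩, truncMonomial_zero u _⟩

theorem map_mulRight_pow_monomialSpan_le (i : Fin n) {s : ℕ} (hs : s < p) :
    (monomialSpan k u p i).map (LinearMap.mulRight k (u i ^ s)) ≤
      monomialSpan k u p (i + 1) := by
  rw [monomialSpan, map_span]
  refine span_mono ?_
  rintro _ ⟨_, ⟨f, rfl⟩, rfl⟩
  refine ⟨Function.update f i ⟨s, hs⟩, ?_⟩
  simp only [LinearMap.mulRight_apply]
  rw [truncMonomial_succ, Function.update_self]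
  congr 1
  refine truncMonomial_congr u fun j hj => ?_
  rw [Function.update_of_ne (Fin.ne_of_lt hj)]

theorem monomialSpan_of_le {i : ℕ} (hi : n ≤ i) :
    monomialSpan k u p i = span k (Set.range fun f : Fin n → Fin p =>
      ((List.finRange n).map fun j => u j ^ (f j : ℕ)).prod) := by
  simp only [monomialSpan, truncMonomial_of_le u _ hi]

end MonomialSpan

section TailIdeal

variable {A : Type*} [Ring A] {n : ℕ} (u : Fin n → A)

-- `Ideal` means left ideal; the generators are closed under right multiplication, so this is
-- the two-sided ideal generated by the `u l` with `i ≤ l`.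
def tailIdeal (i : ℕ) : Ideal A :=
  Ideal.span {x | ∃ (l : Fin n) (b : A), i ≤ (l : ℕ) ∧ x = u l * b}

instance (i : ℕ) : (tailIdeal u i).IsTwoSided :=
  Ideal.isTwoSided_span_of_mul_mem <| by
    rintro _ ⟨l, b, hl, rfl⟩ c
    exact ⟨l, b * c, hl, mul_assoc _ _ _⟩

theorem tailIdeal_of_le {i : ℕ} (hi : n ≤ i) : tailIdeal u i = ⊥ := by
  rw [tailIdeal, Ideal.span_eq_bot]
  rintro _ ⟨l, b, hl, rfl⟩
  omega

theorem tailIdeal_succ (t : Fin n) :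
    tailIdeal u (t + 1) = Ideal.span {x | ∃ (j : Fin n) (b : A), t < j ∧ x = u j * b} := by
  simp only [tailIdeal, Nat.succ_le_iff, Fin.lt_def]

theorem tailIdeal_le_span_sup (t : Fin n)
    (hcomm : ∀ b, u t * b - b * u t ∈ tailIdeal u (t + 1)) :
    tailIdeal u t ≤ Ideal.span {u t} ⊔ tailIdeal u (t + 1) := by
  refine Ideal.span_le.2 ?_
  rintro _ ⟨l, b, hl, rfl⟩
  rcases eq_or_lt_of_le hl with hl_eq | hl_lt
  · rw [← Fin.ext hl_eq, ← add_sub_cancel (b * u t) (u t * b)]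
    exact add_mem (Ideal.mem_sup_left (Ideal.mul_mem_left _ b (Ideal.mem_span_singleton_self _)))
      (Ideal.mem_sup_right (hcomm b))
  · exact Ideal.mem_sup_right (Ideal.subset_span ⟨l, b, hl_lt, rfl⟩)

theorem top_le_one_sup_tailIdeal_zero (k : Type*) [CommRing k] [Algebra k A]
    (hgen : Algebra.adjoin k (Set.range u) = ⊤) :
    ⊤ ≤ 1 ⊔ (tailIdeal u 0).restrictScalars k := by
  rintro a -
  have ha : a ∈ Algebra.adjoin k (Set.range u) := hgen ▸ Algebra.mem_top
  induction ha using Algebra.adjoin_induction with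
  | mem x hx =>
    obtain ⟨l, rfl⟩ := hx
    exact mem_sup_right (Ideal.subset_span ⟨l, 1, l.val.zero_le, (mul_one _).symm⟩)
  | algebraMap r => exact mem_sup_left (Submodule.algebraMap_mem r)
  | add x y _ _ hx hy => exact add_mem hx hy
  | mul x y _ _ hx hy =>
    obtain ⟨_, hx₁, j, hj, rfl⟩ := mem_sup.1 hx
    obtain ⟨r, rfl⟩ := mem_one.1 hx₁
    rw [add_mul, ← Algebra.smul_def]
    exact add_mem (smul_mem _ r hy) (mem_sup_right (Ideal.mul_mem_right y _ hj))

end TailIdeal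

section Spanning

variable {k A : Type*} [CommRing k] [Ring A] [Algebra k A] {n p : ℕ} {u : Fin n → A}

theorem top_le_monomialSpan_sup_tailIdeal (hp : 0 < p)
    (hgen : Algebra.adjoin k (Set.range u) = ⊤) (hpow : ∀ i, u i ^ p = 0)
    (hcomm : ∀ (t : Fin n) (b : A), u t * b - b * u t ∈ tailIdeal u (t + 1)) :
    ∀ i ≤ n, ⊤ ≤ monomialSpan k u p i ⊔ (tailIdeal u i).restrictScalars k := by
  intro i
  induction i with
  | zero =>
    intro _
    exact (top_le_one_sup_tailIdeal_zero u k hgen).trans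
      (sup_le_sup_right (one_le_monomialSpan_zero k u p hp) _)
  | succ i ih =>
    intro hi
    let t : Fin n := ⟨i, hi⟩
    have h : ⊤ ≤ monomialSpan k u p t ⊔
        (Ideal.span {u t} ⊔ tailIdeal u (t + 1)).restrictScalars k :=
      (ih (by omega)).trans <| sup_le_sup_left
        (restrictScalars_mono k (tailIdeal_le_span_sup u t (hcomm t))) _
    have hmono : ⨆ s < p, (monomialSpan k u p t).map (LinearMap.mulRight k (u t ^ s)) ≤
        monomialSpan k u p (t + 1) :=
      iSup₂_le fun s hs => map_mulRight_pow_monomialSpan_le k u p t hs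
    exact (top_le_iSup_map_mulRight_pow_sup (hpow t) h).trans (sup_le_sup_right hmono _)

theorem span_range_orderedMonomial_eq_top (hp : 0 < p)
    (hgen : Algebra.adjoin k (Set.range u) = ⊤) (hpow : ∀ i, u i ^ p = 0)
    (hcomm : ∀ (t : Fin n) (b : A), u t * b - b * u t ∈ tailIdeal u (t + 1)) :
    span k (Set.range fun f : Fin n → Fin p =>
      ((List.finRange n).map fun i => u i ^ (f i : ℕ)).prod) = ⊤ := by
  rw [← monomialSpan_of_le k u p le_rfl, eq_top_iff]
  simpa [tailIdeal_of_le u le_rfl] using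
    top_le_monomialSpan_sup_tailIdeal hp hgen hpow hcomm n le_rfl

end Spanning

/-- PBW-type basis: if `A` is a `k`-algebra generated by `u 0, …, u (n-1)` (`n > 1`)
with `(u i)^p = 0`, `u i` central modulo the two-sided ideal generated by the
later generators, `u (n-1)` central, and `dim_k A = p^n`, then the ordered
monomials `u 0^{i_0} ⋯ u (n-1)^{i_{n-1}}` with `0 ≤ i_j < p` form a `k`-basis. -/
theorem stmt_3 (k : Type) [Field k] (p : ℕ) [Fact p.Prime]
    (A : Type) [Ring A] [Algebra k A] (n : ℕ) (u : Fin n → A)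
    (hgen : Algebra.adjoin k (Set.range u) = ⊤)
    (hpow : ∀ i, u i ^ p = 0)
    (hcentral : ∀ i : Fin n, ∀ a : A,
      u i * a - a * u i ∈ Ideal.span {x : A | ∃ j : Fin n, ∃ b : A, i < j ∧ x = u j * b})
    (hdim : Module.finrank k A = p ^ n) :
    LinearIndependent k
        (fun f : Fin n → Fin p =>
          ((List.finRange n).map fun i => u i ^ (f i : ℕ)).prod) ∧
    Submodule.span k
        (Set.range fun f : Fin n → Fin p =>
          ((List.finRange n).map fun i => u i ^ (f i : ℕ)).prod) = ⊤ := by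
  have hspan := span_range_orderedMonomial_eq_top (Fact.out : p.Prime).pos hgen hpow
    fun t b => tailIdeal_succ u t ▸ hcentral t b
  refine ⟨linearIndependent_of_top_le_span_of_card_eq_finrank hspan.ge ?_, hspan⟩
  simp [hdim]
end

section
/- With A as in the PBW setting (generators u_1,…,u_n satisfying Hypothesis 1), for any s = 1, …, n, the left ideal J_s = A u_s + ⋯ + A u_n is a two-sided ideal, and J_s · (u_s^{p-1} u_{s+1}^{p-1} ⋯ u_n^{p-1}) = 0; i.e., x · u_s^{p-1} ⋯ u_n^{p-1} = 0 for every x ∈ J_s. -/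
/-! Downward induction on `s`. If the ideals `J_t` with `t > s` are two-sided, the relation
`[u_j, a] ∈ Σ_{l > j} u_l A` puts every commutator `[u_j, a]` with `j ≥ s` into `J_s`, so
`u_j a = a u_j + [u_j, a] ∈ J_s` and `J_s` is two-sided. For the annihilation write
`u_s^{p-1} ⋯ u_n^{p-1} = u_s^{p-1} P` with `P = u_{s+1}^{p-1} ⋯ u_n^{p-1}`: the generator `u_s`
dies against `u_s^{p-1}`, and for `j > s` the element `u_j u_s^{p-1}` lies in the two-sided ideal
`J_{s+1}`, which `P` annihilates by induction. -/

theorem Ideal.isTwoSided_span_of_mul_mem_s4 {A : Type*} [Semiring A] {S : Set A}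
    (h : ∀ x ∈ S, ∀ a, x * a ∈ Ideal.span S) : (Ideal.span S).IsTwoSided :=
  ⟨fun a hx =>
    (Submodule.span_le (p := Submodule.comap (LinearMap.mulRight A a) (Ideal.span S))).mpr
      (fun x hx => h x hx a) hx⟩

theorem List.prod_map_drop_finRange {M : Type*} [Monoid M] {n : ℕ} (f : Fin n → M) (t : Fin n) :
    (((List.finRange n).drop t).map f).prod =
      f t * (((List.finRange n).drop (t + 1)).map f).prod := by
  rw [List.drop_eq_getElem_cons (by simp), List.map_cons, List.prod_cons, List.getElem_finRange]
  rfl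

section

variable {A : Type*} [Ring A]

theorem isTwoSided_span_image_Ici {ι : Type*} [LinearOrder ι] [WellFoundedGT ι] (u : ι → A)
    (hcomm : ∀ i a, u i * a - a * u i ∈ Ideal.span {x | ∃ j b, i < j ∧ x = u j * b})
    (t : ι) : (Ideal.span (u '' Set.Ici t)).IsTwoSided := by
  induction t using WellFoundedGT.induction with
  | _ t ih =>
  apply Ideal.isTwoSided_span_of_mul_mem_s4
  rintro _ ⟨j, hj, rfl⟩ a
  have hcomm_le : Ideal.span {x | ∃ l b, j < l ∧ x = u l * b} ≤ Ideal.span (u '' Set.Ici t) := by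
    refine Ideal.span_le.mpr ?_
    rintro _ ⟨l, b, hjl, rfl⟩
    have := ih l (lt_of_le_of_lt hj hjl)
    have hJ : Ideal.span (u '' Set.Ici l) ≤ Ideal.span (u '' Set.Ici t) :=
      Ideal.span_mono (Set.image_mono (Set.Ici_subset_Ici.mpr (hj.trans hjl.le)))
    exact hJ (Ideal.mul_mem_right b _ (Ideal.subset_span ⟨l, le_rfl, rfl⟩))
  rw [show u j * a = a * u j + (u j * a - a * u j) by abel]
  exact Ideal.add_mem _ (Ideal.mul_mem_left _ a (Ideal.subset_span ⟨j, hj, rfl⟩))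
    (hcomm_le (hcomm j a))

theorem mul_prod_drop_finRange_pow_eq_zero {n e : ℕ} (u : Fin n → A)
    (hcomm : ∀ i a, u i * a - a * u i ∈ Ideal.span {x | ∃ j b, i < j ∧ x = u j * b})
    (hnil : ∀ i, u i ^ (e + 1) = 0) (t : Fin n) :
    ∀ x ∈ Ideal.span (u '' Set.Ici t),
      x * (((List.finRange n).drop t).map fun j => u j ^ e).prod = 0 := by
  induction t using WellFoundedGT.induction with
  | _ t ih =>
  intro x hx
  refine (Submodule.span_le (p := LinearMap.ker (LinearMap.mulRight A _))).mpr ?_ hx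
  rintro _ ⟨j, hj, rfl⟩
  rw [SetLike.mem_coe, LinearMap.mem_ker, LinearMap.mulRight_apply,
    List.prod_map_drop_finRange, ← mul_assoc]
  rcases (Set.mem_Ici.mp hj).eq_or_lt with rfl | htj
  · rw [← pow_succ', hnil, zero_mul]
  · have ht1 : (t : ℕ) + 1 < n := by omega
    have := isTwoSided_span_image_Ici u hcomm ⟨t + 1, ht1⟩
    exact ih ⟨t + 1, ht1⟩ (Fin.lt_def.mpr (Nat.lt_succ_self t)) _
      (Ideal.mul_mem_right _ _ (Ideal.subset_span ⟨j, Fin.le_def.mpr htj, rfl⟩))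

end

/-- With `A` as in the PBW setting, for any `s`, the left ideal
`J_s = A u_s + ⋯ + A u_{n-1}` is a two-sided ideal, and
`x * u_s^{p-1} * ⋯ * u_{n-1}^{p-1} = 0` for every `x ∈ J_s`. -/
theorem stmt_4 (p : ℕ) [Fact p.Prime]
    (A : Type) [Ring A] (n : ℕ) (u : Fin n → A)
    (hpow : ∀ i, u i ^ p = 0)
    (hcentral : ∀ i : Fin n, ∀ a : A,
      u i * a - a * u i ∈ Ideal.span {x : A | ∃ j : Fin n, ∃ b : A, i < j ∧ x = u j * b})
    (s : Fin n) :
    ∀ x ∈ Ideal.span (u '' {j : Fin n | s ≤ j}),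
      (∀ a : A, x * a ∈ Ideal.span (u '' {j : Fin n | s ≤ j})) ∧
      x * (((List.finRange n).drop (s : ℕ)).map fun j => u j ^ (p - 1)).prod = 0 := by
  intro x hx
  have : (Ideal.span (u '' {j | s ≤ j})).IsTwoSided := isTwoSided_span_image_Ici u hcentral s
  have hnil : ∀ i, u i ^ (p - 1 + 1) = 0 := by
    rw [Nat.sub_add_cancel (Fact.out : p.Prime).one_le]
    exact hpow
  exact ⟨fun a => Ideal.mul_mem_right a _ hx,
    mul_prod_drop_finRange_pow_eq_zero u hcentral hnil s x hx⟩
end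

section
/- With A as in the PBW setting (generators u_1,…,u_n satisfying Hypothesis 1), suppose v = a_1 u_1 + ⋯ + a_n u_n with a_i ≠ 0 for some i < n, and v^p = 0. Then v^{p-1} ∉ A u_n, and the subalgebra E generated by v and u_n is isomorphic to k[s,t]/(s^p, t^p) (the group algebra of an elementary abelian p-group of rank 2); in particular v^{p-1} u_n^{p-1} ≠ 0. -/
/-!
Let `S j` be the `k`-span of the ordered monomials involving some `u m` with `j ≤ m`. Because `u j`
is central modulo the ideal generated by the later generators, downward induction on `j` shows that
every `S j` is a two-sided ideal. If `i` is the first index with `a i ≠ 0`, then `v ≡ a i • u i`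
modulo `S (i + 1)`, so the coordinate of `v ^ (p - 1) * u last ^ (p - 1)` at the basis monomial
`u i ^ (p - 1) * u last ^ (p - 1)` is `a i ^ (p - 1) ≠ 0`.

For commuting `x`, `y` with `x ^ p = y ^ p = 0` and `x ^ (p - 1) * y ^ (p - 1) ≠ 0`, multiplying a
relation among the `x ^ a * y ^ b` (`a, b < p`) by `x ^ (p - 1 - a₀) * y ^ (p - 1 - b₀)`, for
`(a₀, b₀)` minimal in its support, isolates a nonzero multiple of `x ^ (p - 1) * y ^ (p - 1)`.
So these monomials are independent and `k[s, t] / (s ^ p, t ^ p) → k[x, y]` is an isomorphism.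
-/

open MvPolynomial

section Monomial

variable {M : Type*} [Monoid M] {n : ℕ}

def pbwMonomial (u : Fin n → M) (g : Fin n → ℕ) : M :=
  ((List.finRange n).map fun i => u i ^ g i).prod

lemma pbwMonomial_eq_take_mul (u : Fin n → M) {g : Fin n → ℕ} {j : Fin n}
    (hg : ∀ m, j < m → g m = 0) :
    pbwMonomial u g = (((List.finRange n).take j).map fun i => u i ^ g i).prod * u j ^ g j := by
  have hdrop : (List.finRange n).drop j = j :: (List.finRange n).drop (j + 1) := by
    rw [List.drop_eq_getElem_cons (by simp)]; simp
  have htail : (((List.finRange n).drop (j + 1)).map fun i => u i ^ g i).prod = 1 := by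
    refine List.prod_eq_one fun x hx => ?_
    obtain ⟨m, hm, rfl⟩ := List.mem_map.mp hx
    obtain ⟨i, hi, rfl⟩ := List.mem_iff_getElem.mp hm
    rw [hg _ ?_, pow_zero]
    simp only [List.getElem_drop, List.getElem_finRange, Fin.cast_mk, Fin.lt_def]
    omega
  conv_lhs => rw [pbwMonomial, ← List.take_append_drop j (List.finRange n), hdrop]
  rw [List.map_append, List.prod_append, List.map_cons, List.prod_cons, htail, mul_one]

lemma pbwMonomial_add_single (u : Fin n → M) {g : Fin n → ℕ} {j : Fin n}
    (hg : ∀ m, j < m → g m = 0) (e : ℕ) :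
    pbwMonomial u (g + (Pi.single j e : Fin n → ℕ)) = pbwMonomial u g * u j ^ e := by
  have hg' : ∀ m, j < m → (g + (Pi.single j e : Fin n → ℕ)) m = 0 := fun m hm => by
    simp [hg m hm, hm.ne']
  rw [pbwMonomial_eq_take_mul u hg', pbwMonomial_eq_take_mul u hg, mul_assoc, ← pow_add]
  congr 2
  · refine List.map_congr_left fun m hm => ?_
    obtain ⟨i, hi, rfl⟩ := List.mem_iff_getElem.mp hm
    simp only [List.length_take, List.length_finRange] at hi
    simp [Fin.ext_iff, show i ≠ j by omega]
  · simp

lemma pbwMonomial_zero (u : Fin n → M) : pbwMonomial u 0 = 1 :=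
  List.prod_eq_one (by simp)

lemma pbwMonomial_single (u : Fin n → M) (j : Fin n) (e : ℕ) :
    pbwMonomial u (Pi.single j e) = u j ^ e := by
  simpa [pbwMonomial_zero] using pbwMonomial_add_single u (g := 0) (j := j) (fun _ _ => rfl) e

lemma exists_pbwMonomial_eq_mul (u : Fin n → M) {g : Fin n → ℕ} {j : Fin n}
    (hg : ∀ m, j < m → g m = 0) (hj : g j ≠ 0) : ∃ x, pbwMonomial u g = x * u j := by
  set g' := Function.update g j (g j - 1)
  have hg' : ∀ m, j < m → g' m = 0 := fun m hm => by simp [g', hm.ne', hg m hm]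
  refine ⟨pbwMonomial u g', ?_⟩
  rw [← pow_one (u j), ← pbwMonomial_add_single u hg']
  congr 1
  ext m
  rcases eq_or_ne m j with rfl | hm
  · simp only [g', Pi.add_apply, Function.update_self, Pi.single_eq_same]
    omega
  · simp [g', hm]

lemma pbwMonomial_eq_zero {M : Type*} [MonoidWithZero M] {p : ℕ} {u : Fin n → M}
    (hpow : ∀ i, u i ^ p = 0) {g : Fin n → ℕ} {j : Fin n} (hj : p ≤ g j) :
    pbwMonomial u g = 0 :=
  List.prod_eq_zero <| List.mem_map.mpr ⟨j, List.mem_finRange j, pow_eq_zero_of_le hj (hpow j)⟩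

end Monomial

section MulAbsorbing

variable {k A : Type*} [CommSemiring k] [Semiring A] [Algebra k A]

def IsMulAbsorbing (S : Submodule k A) : Prop :=
  ∀ x ∈ S, ∀ y, y * x ∈ S ∧ x * y ∈ S

lemma isMulAbsorbing_span {s : Set A}
    (hs : ∀ x ∈ s, ∀ y, y * x ∈ Submodule.span k s ∧ x * y ∈ Submodule.span k s) :
    IsMulAbsorbing (Submodule.span k s) := by
  intro x hx y
  induction hx using Submodule.span_induction with
  | mem x hx => exact hs x hx y
  | zero => simp
  | add x z _ _ hx hz =>
    rw [mul_add, add_mul]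
    exact ⟨add_mem hx.1 hz.1, add_mem hx.2 hz.2⟩
  | smul c x _ hx =>
    rw [mul_smul_comm, smul_mul_assoc]
    exact ⟨Submodule.smul_mem _ c hx.1, Submodule.smul_mem _ c hx.2⟩

lemma IsMulAbsorbing.ideal_span_subset {S : Submodule k A} (hS : IsMulAbsorbing S) {s : Set A}
    (hs : s ⊆ S) : (Ideal.span s : Set A) ⊆ S := by
  intro x hx
  induction hx using Submodule.span_induction with
  | mem x hx => exact hs hx
  | zero => exact S.zero_mem
  | add x z _ _ hx hz => exact add_mem hx hz
  | smul r x _ hx => exact (hS x hx r).1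

lemma IsMulAbsorbing.pow_sub_pow_mem {R : Type*} [Ring R] [Algebra k R] {S : Submodule k R}
    (hS : IsMulAbsorbing S) {x y : R} (h : x - y ∈ S) (m : ℕ) : x ^ m - y ^ m ∈ S := by
  induction m with
  | zero => simp
  | succ m ih =>
    have : x ^ (m + 1) - y ^ (m + 1) = x ^ m * (x - y) + (x ^ m - y ^ m) * y := by
      rw [pow_succ, pow_succ]; noncomm_ring
    rw [this]
    exact add_mem (hS _ h _).1 (hS _ ih _).2

end MulAbsorbing

section MonomialSpan

variable (k : Type*) {A : Type*} [CommRing k] [Ring A] [Algebra k A] {n : ℕ}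

def monomialSpanGe (u : Fin n → A) (j : ℕ) : Submodule k A :=
  Submodule.span k (pbwMonomial u '' {g | ∃ m : Fin n, j ≤ (m : ℕ) ∧ g m ≠ 0})

variable {k} (u : Fin n → A)

lemma pbwMonomial_mem_monomialSpanGe {j : ℕ} {g : Fin n → ℕ} {m : Fin n} (hm : j ≤ m)
    (hg : g m ≠ 0) : pbwMonomial u g ∈ monomialSpanGe k u j :=
  Submodule.subset_span ⟨g, ⟨m, hm, hg⟩, rfl⟩

lemma mem_monomialSpanGe {j : ℕ} {m : Fin n} (hm : j ≤ m) : u m ∈ monomialSpanGe k u j := by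
  simpa [pbwMonomial_single] using
    pbwMonomial_mem_monomialSpanGe (k := k) u (g := Pi.single m 1) hm (by simp)

lemma monomialSpanGe_antitone : Antitone (monomialSpanGe k u) := fun _ _ hj =>
  Submodule.span_mono fun _ ⟨g, ⟨m, hm, hg⟩, h⟩ => ⟨g, ⟨m, hj.trans hm, hg⟩, h⟩

lemma monomialSpanGe_eq_bot {j : ℕ} (hj : n ≤ j) : monomialSpanGe k u j = ⊥ := by
  rw [monomialSpanGe, Submodule.span_eq_bot]
  rintro _ ⟨g, ⟨m, hm, -⟩, rfl⟩
  omega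

variable {u}

lemma mul_generator_mem_monomialSpanGe (hspan : Submodule.span k (Set.range (pbwMonomial u)) = ⊤)
    {j : Fin n} (ih : IsMulAbsorbing (monomialSpanGe k u ((j : ℕ) + 1))) (x : A) :
    x * u j ∈ monomialSpanGe k u j := by
  have hx : x ∈ Submodule.span k (Set.range (pbwMonomial u)) := hspan ▸ trivial
  induction hx using Submodule.span_induction with
  | mem x hx =>
    obtain ⟨g, rfl⟩ := hx
    by_cases h : ∃ m, j < m ∧ g m ≠ 0
    · obtain ⟨m, hm, hgm⟩ := h
      exact monomialSpanGe_antitone u (Nat.le_succ j)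
        (ih _ (pbwMonomial_mem_monomialSpanGe u hm hgm) _).2
    · push Not at h
      rw [← pow_one (u j), ← pbwMonomial_add_single u h]
      exact pbwMonomial_mem_monomialSpanGe u le_rfl (by simp)
  | zero => simp
  | add x z _ _ hx hz => rw [add_mul]; exact add_mem hx hz
  | smul c x _ hx => rw [smul_mul_assoc]; exact Submodule.smul_mem _ c hx

lemma isMulAbsorbing_monomialSpanGe_of_succ
    (hspan : Submodule.span k (Set.range (pbwMonomial u)) = ⊤) {j : Fin n}
    (hcentral : ∀ a : A,
      u j * a - a * u j ∈ Ideal.span {x : A | ∃ m : Fin n, ∃ b : A, j < m ∧ x = u m * b})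
    (ih : IsMulAbsorbing (monomialSpanGe k u ((j : ℕ) + 1))) :
    IsMulAbsorbing (monomialSpanGe k u j) := by
  have hle := monomialSpanGe_antitone (k := k) u (Nat.le_succ j)
  refine isMulAbsorbing_span ?_
  rintro _ ⟨g, ⟨m, hm, hgm⟩, rfl⟩ y
  by_cases h : ∃ m', j < m' ∧ g m' ≠ 0
  · obtain ⟨m', hm', hgm'⟩ := h
    have hg := ih _ (pbwMonomial_mem_monomialSpanGe u hm' hgm') y
    exact ⟨hle hg.1, hle hg.2⟩
  push Not at h
  have hgj : g j ≠ 0 := by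
    obtain rfl : m = j := le_antisymm (not_lt.mp fun hjm => hgm (h m hjm)) hm
    exact hgm
  obtain ⟨x, hx⟩ := exists_pbwMonomial_eq_mul u h hgj
  have hcomm : u j * y - y * u j ∈ monomialSpanGe k u ((j : ℕ) + 1) :=
    ih.ideal_span_subset
      (by rintro _ ⟨m, b, hm, rfl⟩; exact (ih _ (mem_monomialSpanGe u hm) b).2) (hcentral y)
  rw [hx]
  constructor
  · rw [← mul_assoc]
    exact mul_generator_mem_monomialSpanGe hspan ih _
  · have : x * u j * y = x * y * u j + x * (u j * y - y * u j) := by noncomm_ring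
    rw [this]
    exact add_mem (mul_generator_mem_monomialSpanGe hspan ih _) (hle (ih _ hcomm x).1)

lemma isMulAbsorbing_monomialSpanGe
    (hspan : Submodule.span k (Set.range (pbwMonomial u)) = ⊤)
    (hcentral : ∀ i : Fin n, ∀ a : A,
      u i * a - a * u i ∈ Ideal.span {x : A | ∃ j : Fin n, ∃ b : A, i < j ∧ x = u j * b})
    (j : ℕ) : IsMulAbsorbing (monomialSpanGe k u j) := by
  suffices ∀ d i, n ≤ i + d → IsMulAbsorbing (monomialSpanGe k u i) from this n j (by omega)
  intro d
  induction d with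
  | zero =>
    intro i hi x hx y
    rw [monomialSpanGe_eq_bot u (Nat.add_zero i ▸ hi), Submodule.mem_bot] at hx ⊢
    simp [hx]
  | succ d ih =>
    intro i hi
    by_cases hid : n ≤ i + d
    · exact ih i hid
    · exact isMulAbsorbing_monomialSpanGe_of_succ (j := ⟨i, by omega⟩) hspan (hcentral _)
        (ih (i + 1) (by omega))

end MonomialSpan

section Coordinates

variable {k A : Type*} [CommRing k] [Ring A] [Algebra k A] {n p : ℕ} {u : Fin n → A}

lemma coord_pbwMonomial_of_ne (hpow : ∀ i, u i ^ p = 0) (b : Module.Basis (Fin n → Fin p) k A)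
    (hb : ∀ f, b f = pbwMonomial u fun i => f i) {f : Fin n → Fin p} {g : Fin n → ℕ}
    (hg : g ≠ fun i => (f i : ℕ)) : b.coord f (pbwMonomial u g) = 0 := by
  by_cases h : ∀ i, g i < p
  · rw [show pbwMonomial u g = b fun i => ⟨g i, h i⟩ by rw [hb], Module.Basis.coord_apply,
      Module.Basis.repr_self, Finsupp.single_apply, if_neg]
    rintro rfl
    exact hg rfl
  · push Not at h
    obtain ⟨i, hi⟩ := h
    rw [pbwMonomial_eq_zero hpow hi, map_zero]

lemma mul_last_pow_ne_zero (hp : 0 < p) (hpow : ∀ i, u i ^ p = 0)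
    (b : Module.Basis (Fin n → Fin p) k A) (hb : ∀ f, b f = pbwMonomial u fun i => f i)
    {i last : Fin n} (hi : i < last) (hlast : ∀ m, m ≤ last) {c : k} (hc : c ≠ 0) {y : A}
    (hy : y - c • u i ^ (p - 1) ∈ monomialSpanGe k u ((i : ℕ) + 1)) :
    y * u last ^ (p - 1) ≠ 0 := by
  have hbeyond : ∀ g : Fin n → ℕ, ∀ m, last < m → g m = 0 :=
    fun _ m hm => absurd (hlast m) (not_le.mpr hm)
  set gstar : Fin n → ℕ := Pi.single i (p - 1) + Pi.single last (p - 1)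
  have hgstar : ∀ m, gstar m < p := by
    intro m
    rcases eq_or_ne m i with rfl | hmi
    · simp [gstar, hi.ne, hp]
    · by_cases hml : m = last <;> simp [gstar, hmi, hml, hi.ne', hp]
  set fstar : Fin n → Fin p := fun m => ⟨gstar m, hgstar m⟩
  have hlead : b.coord fstar (u i ^ (p - 1) * u last ^ (p - 1)) = 1 := by
    rw [← pbwMonomial_single u i, ← pbwMonomial_add_single u (hbeyond _), ← hb fstar,
      Module.Basis.coord_apply, Module.Basis.repr_self, Finsupp.single_eq_same]
  -- Multiplying by `u last ^ (p - 1)` kills a monomial involving `u last`; any other monomial of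
  -- `monomialSpanGe k u (i + 1)` involves some `u m` with `i < m < last`, so it is not `fstar`.
  have hrest : ∀ t ∈ monomialSpanGe k u ((i : ℕ) + 1),
      b.coord fstar (t * u last ^ (p - 1)) = 0 := by
    intro t ht
    induction ht using Submodule.span_induction with
    | mem t ht =>
      obtain ⟨g, ⟨m, hm, hgm⟩, rfl⟩ := ht
      rw [← pbwMonomial_add_single u (hbeyond g)]
      by_cases hml : m = last
      · subst hml
        have hpm : p ≤ (g + (Pi.single m (p - 1) : Fin n → ℕ)) m := by
          simp only [Pi.add_apply, Pi.single_eq_same]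
          omega
        rw [pbwMonomial_eq_zero hpow hpm, map_zero]
      · refine coord_pbwMonomial_of_ne hpow b hb fun h => hgm ?_
        have hmi : m ≠ i := fun hmi => by subst hmi; omega
        simpa [fstar, gstar, hml, hmi] using congrFun h m
    | zero => simp
    | add x z _ _ hx hz => rw [add_mul, map_add, hx, hz, add_zero]
    | smul r x _ hx => rw [smul_mul_assoc, map_smul, hx, smul_zero]
  have hsplit : y * u last ^ (p - 1) = c • (u i ^ (p - 1) * u last ^ (p - 1)) +
      (y - c • u i ^ (p - 1)) * u last ^ (p - 1) := by
    rw [sub_mul, smul_mul_assoc, add_sub_cancel]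
  intro h0
  have := congrArg (b.coord fstar) hsplit
  rw [h0, map_zero, map_add, map_smul, hlead, hrest _ hy, smul_eq_mul, mul_one, add_zero] at this
  exact hc this.symm

end Coordinates

section Truncated

variable {k : Type*} [Field k] {p : ℕ}

variable (k p) in
noncomputable def truncIdeal : Ideal (MvPolynomial (Fin 2) k) := Ideal.span {X 0 ^ p, X 1 ^ p}

lemma linearIndependent_pow_mul_pow {B : Type*} [CommRing B] [Algebra k B] {x y : B}
    (hx : x ^ p = 0) (hy : y ^ p = 0) (hxy : x ^ (p - 1) * y ^ (p - 1) ≠ 0) :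
    LinearIndependent k fun q : Fin p × Fin p => x ^ (q.1 : ℕ) * y ^ (q.2 : ℕ) := by
  classical
  rw [Fintype.linearIndependent_iff]
  intro c hc
  by_contra! hne
  obtain ⟨q₀, hq₀⟩ := Finset.exists_minimal (s := {q | c q ≠ 0})
    (by obtain ⟨q, hq⟩ := hne; exact ⟨q, by simpa using hq⟩)
  set w := x ^ (p - 1 - q₀.1) * y ^ (p - 1 - q₀.2)
  have hterm : ∀ q : Fin p × Fin p, x ^ (q.1 : ℕ) * y ^ (q.2 : ℕ) * w =
      x ^ ((q.1 : ℕ) + (p - 1 - q₀.1)) * y ^ ((q.2 : ℕ) + (p - 1 - q₀.2)) := fun q => by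
    simp only [w, pow_add]; ring
  have hsum : ∑ q, c q • (x ^ (q.1 : ℕ) * y ^ (q.2 : ℕ) * w) =
      c q₀ • (x ^ (p - 1) * y ^ (p - 1)) := by
    rw [Finset.sum_eq_single q₀]
    · rw [hterm, Nat.add_sub_cancel' (by omega), Nat.add_sub_cancel' (by omega)]
    · intro q _ hq
      by_cases hcq : c q = 0
      · rw [hcq, zero_smul]
      have hlt : ¬ q ≤ q₀ := fun hle => hq (hq₀.eq_of_le (by simpa using hcq) hle)
      rw [Prod.le_def, not_and_or, not_le, not_le] at hlt
      rw [hterm]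
      rcases hlt with h | h
      · rw [pow_eq_zero_of_le (by omega) hx, zero_mul, smul_zero]
      · rw [pow_eq_zero_of_le (by omega) hy, mul_zero, smul_zero]
    · simp
  refine smul_ne_zero (by simpa using hq₀.prop) hxy ?_
  rw [← hsum]
  simpa only [Finset.sum_mul, smul_mul_assoc, zero_mul] using congrArg (· * w) hc

lemma span_range_mk_monomial_eq_top :
    Submodule.span k (Set.range fun q : Fin p × Fin p =>
      Ideal.Quotient.mkₐ k (truncIdeal k p) (X 0 ^ (q.1 : ℕ) * X 1 ^ (q.2 : ℕ))) = ⊤ := by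
  refine Submodule.eq_top_iff'.mpr fun z => ?_
  obtain ⟨F, rfl⟩ := Ideal.Quotient.mkₐ_surjective k (truncIdeal k p) z
  induction F using MvPolynomial.induction_on' with
  | monomial d c =>
    have hmon : monomial d c = c • (X 0 ^ d 0 * X 1 ^ d 1 : MvPolynomial (Fin 2) k) := by
      rw [monomial_eq, smul_eq_C_mul, Finsupp.prod_fintype _ _ (by simp), Fin.prod_univ_two]
    rw [hmon, map_smul]
    refine Submodule.smul_mem _ c ?_
    by_cases hd : d 0 < p ∧ d 1 < p
    · exact Submodule.subset_span ⟨(⟨d 0, hd.1⟩, ⟨d 1, hd.2⟩), rfl⟩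
    convert Submodule.zero_mem _
    rw [Ideal.Quotient.mkₐ_eq_mk, Ideal.Quotient.eq_zero_iff_mem]
    rcases not_and_or.mp hd with h | h
    · exact Ideal.mem_of_dvd _ (dvd_mul_of_dvd_left (pow_dvd_pow _ (not_lt.mp h)) _)
        (Ideal.subset_span (Set.mem_insert _ _))
    · exact Ideal.mem_of_dvd _ (dvd_mul_of_dvd_right (pow_dvd_pow _ (not_lt.mp h)) _)
        (Ideal.subset_span (Set.mem_insert_of_mem _ rfl))
  | add F G hF hG => rw [map_add]; exact add_mem hF hG

lemma nonempty_algEquiv_truncated {B : Type*} [CommRing B] [Algebra k B] {x y : B}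
    (hgen : Algebra.adjoin k {x, y} = ⊤) (hx : x ^ p = 0) (hy : y ^ p = 0)
    (hxy : x ^ (p - 1) * y ^ (p - 1) ≠ 0) :
    Nonempty (B ≃ₐ[k] MvPolynomial (Fin 2) k ⧸ truncIdeal k p) := by
  set φ := aeval (R := k) ![x, y]
  have hker : ∀ F ∈ truncIdeal k p, φ F = 0 := by
    refine fun F hF => (RingHom.mem_ker).mp ((Ideal.span_le.mpr ?_) hF)
    rintro _ (rfl | rfl) <;> simp [φ, hx, hy]
  set ψ := Ideal.Quotient.liftₐ _ φ hker
  have hψ : ∀ F, ψ (Ideal.Quotient.mkₐ k _ F) = φ F := fun F => rfl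
  have hsurj : Function.Surjective ψ := by
    have hφ : φ.range = ⊤ := by
      rw [← Algebra.adjoin_range_eq_range_aeval, Matrix.range_cons_cons_empty, hgen]
    intro z
    obtain ⟨F, hF⟩ := (AlgHom.range_eq_top φ).mp hφ z
    exact ⟨_, (hψ F).trans hF⟩
  have hinj : Function.Injective ψ := by
    refine (injective_iff_map_eq_zero ψ).mpr fun z hz => ?_
    have hz' : z ∈ (⊤ : Submodule k _) := trivial
    rw [← span_range_mk_monomial_eq_top] at hz'
    obtain ⟨c, rfl⟩ := (Submodule.mem_span_range_iff_exists_fun k).mp hz'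
    simp only [map_sum, map_smul, hψ, map_mul, map_pow, φ, aeval_X, Matrix.cons_val_zero,
      Matrix.cons_val_one] at hz
    have hli := linearIndependent_pow_mul_pow (k := k) hx hy hxy
    rw [Fintype.linearIndependent_iff] at hli
    have hc := hli c hz
    exact Finset.sum_eq_zero fun q _ => by rw [hc q, zero_smul]
  exact ⟨(AlgEquiv.ofBijective ψ ⟨hinj, hsurj⟩).symm⟩

open scoped IsMulCommutative in
lemma nonempty_adjoin_algEquiv_truncated {A : Type*} [Ring A] [Algebra k A] {x y : A}
    (hcomm : Commute x y) (hx : x ^ p = 0) (hy : y ^ p = 0)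
    (hxy : x ^ (p - 1) * y ^ (p - 1) ≠ 0) :
    Nonempty (Algebra.adjoin k {x, y} ≃ₐ[k] MvPolynomial (Fin 2) k ⧸ truncIdeal k p) := by
  have := Algebra.isMulCommutative_adjoin k (s := {x, y}) (by
    rintro _ (rfl | rfl) _ (rfl | rfl)
    exacts [rfl, hcomm.eq, hcomm.eq.symm, rfl])
  let x' : Algebra.adjoin k {x, y} := ⟨x, Algebra.subset_adjoin (by simp)⟩
  let y' : Algebra.adjoin k {x, y} := ⟨y, Algebra.subset_adjoin (by simp)⟩
  refine nonempty_algEquiv_truncated (x := x') (y := y') ?_ (Subtype.ext hx) (Subtype.ext hy)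
    fun h => hxy (congrArg Subtype.val h)
  rw [← Algebra.adjoin_adjoin_coe_preimage]
  congr 1
  ext z
  simp [x', y', Subtype.ext_iff]

end Truncated

/-- With `A` as in the PBW setting (ordered monomials form a basis), if
`v = a_1 u_1 + ⋯ + a_n u_n` with `a_i ≠ 0` for some `i < n` and `v^p = 0`,
then `v^{p-1} ∉ A u_n`, the subalgebra generated by `v` and `u_n` is
isomorphic to `k[s,t]/(s^p, t^p)`, and `v^{p-1} u_n^{p-1} ≠ 0`. -/
theorem stmt_5 (k : Type) [Field k] (p : ℕ) [Fact p.Prime]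
    (A : Type) [Ring A] [Algebra k A] (n : ℕ) (hn : 1 < n) (u : Fin n → A)
    (hpow : ∀ i, u i ^ p = 0)
    (hcentral : ∀ i : Fin n, ∀ a : A,
      u i * a - a * u i ∈ Ideal.span {x : A | ∃ j : Fin n, ∃ b : A, i < j ∧ x = u j * b})
    (hlast : ∀ a : A, u ⟨n - 1, by omega⟩ * a = a * u ⟨n - 1, by omega⟩)
    (hbasis : LinearIndependent k
        (fun f : Fin n → Fin p =>
          ((List.finRange n).map fun i => u i ^ (f i : ℕ)).prod) ∧
      Submodule.span k
        (Set.range fun f : Fin n → Fin p =>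
          ((List.finRange n).map fun i => u i ^ (f i : ℕ)).prod) = ⊤)
    (a : Fin n → k) (v : A) (hv : v = ∑ i, a i • u i)
    (hne : ∃ i : Fin n, (i : ℕ) < n - 1 ∧ a i ≠ 0)
    (hvp : v ^ p = 0) :
    v ^ (p - 1) ∉ Ideal.span ({u ⟨n - 1, by omega⟩} : Set A) ∧
    Nonempty ((Algebra.adjoin k ({v, u ⟨n - 1, by omega⟩} : Set A)) ≃ₐ[k]
      (MvPolynomial (Fin 2) k ⧸
        Ideal.span ({(X 0 : MvPolynomial (Fin 2) k) ^ p, (X 1) ^ p}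
          : Set (MvPolynomial (Fin 2) k)))) ∧
    v ^ (p - 1) * (u ⟨n - 1, by omega⟩) ^ (p - 1) ≠ 0 := by
  set last : Fin n := ⟨n - 1, by omega⟩
  have hp : 0 < p := (Fact.out : p.Prime).pos
  obtain ⟨hli, hsp⟩ := hbasis
  have hspan : Submodule.span k (Set.range (pbwMonomial u)) = ⊤ :=
    top_unique <| hsp.ge.trans <| Submodule.span_mono <| by
      rintro _ ⟨f, rfl⟩
      exact ⟨_, rfl⟩
  obtain ⟨j, hj, haj⟩ := hne
  obtain ⟨i, hai, hmin⟩ := wellFounded_lt.has_min {i | a i ≠ 0} ⟨j, haj⟩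
  have hil : i < last := lt_of_le_of_lt (not_lt.mp (hmin j haj)) hj
  have hvi : v - a i • u i ∈ monomialSpanGe k u ((i : ℕ) + 1) := by
    rw [hv, ← Finset.add_sum_erase _ _ (Finset.mem_univ i), add_sub_cancel_left]
    refine Submodule.sum_mem _ fun m hm => ?_
    by_cases ham : a m = 0
    · simp [ham]
    · exact Submodule.smul_mem _ _ <| mem_monomialSpanGe u <|
        lt_of_le_of_ne (not_lt.mp (hmin m ham)) (Finset.ne_of_mem_erase hm).symm
  have key : v ^ (p - 1) * u last ^ (p - 1) ≠ 0 := by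
    refine mul_last_pow_ne_zero hp hpow (Module.Basis.mk hli hsp.ge)
      (fun _ => Module.Basis.mk_apply ..) hil (fun m => Nat.le_sub_one_of_lt m.isLt)
      (pow_ne_zero (p - 1) hai) ?_
    simpa [smul_pow] using
      (isMulAbsorbing_monomialSpanGe hspan hcentral _).pow_sub_pow_mem hvi (p - 1)
  refine ⟨fun hmem => key ?_,
    nonempty_adjoin_algEquiv_truncated (hlast v).symm hvp (hpow last) key, key⟩
  obtain ⟨r, hr⟩ := Ideal.mem_span_singleton'.mp hmem
  rw [← hr, mul_assoc, ← pow_succ', Nat.sub_add_cancel hp, hpow, mul_zero]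
end

section
/- The restriction of the Weyl module V(n·p^r) of SL_2 to the r-th Frobenius kernel of its unipotent radical decomposes as V(n·p^r)|_{U_r} ≅ k ⊕ (kU_r)^{⊕ n}: equivalently, in the module S^{np^r}(W) with divided power action as above, the map from a free kU_r-module Q of rank n sending the i-th generator to w_{(i-1)p^r} is an injective split kU_r-homomorphism whose image has codimension 1, with complement the trivial module. -/
/-!
The elements `w (i p^r + j)`, `i < n`, `j < p^r`, satisfy `e j • w (i p^r) = w (i p^r + j)`
because `C(i p^r + j, j) ≡ 1 (mod p)` by Lucas' theorem. Hence the `A`-linear map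
`ψ : Aⁿ → V`, `f ↦ ∑ f i • w (i p^r)`, sends the `k`-basis `Pi.single i (e j)` of `Aⁿ`
bijectively onto the basis vectors `w t`, `t < n p^r`: it is injective and its image is
spanned by all but the last basis vector `w (n p^r)`. That last vector is killed by every
`e j` with `j ≥ 1`, so the cyclic `A`-module it generates is the line `k ∙ w (n p^r)`,
a complement of the image.
-/

open Submodule

theorem Nat.choose_mul_pow_add_modEq_one (p : ℕ) [Fact p.Prime] (r m j : ℕ)
    (hj : j < p ^ r) : (m * p ^ r + j).choose j ≡ 1 [MOD p] := by
  induction r generalizing m j with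
  | zero =>
    obtain rfl : j = 0 := by simpa using hj
    simp [Nat.ModEq.refl]
  | succ r ih =>
    have hp : 0 < p := (Fact.out : p.Prime).pos
    have hmod : (m * p ^ (r + 1) + j) % p = j % p := by
      rw [pow_succ', mul_left_comm, Nat.mul_add_mod]
    have hdiv : (m * p ^ (r + 1) + j) / p = m * p ^ r + j / p := by
      rw [pow_succ', mul_left_comm, Nat.mul_add_div hp]
    calc (m * p ^ (r + 1) + j).choose j
        ≡ ((m * p ^ (r + 1) + j) % p).choose (j % p) *
            ((m * p ^ (r + 1) + j) / p).choose (j / p) [MOD p] :=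
          Choose.choose_modEq_choose_mod_mul_choose_div_nat
      _ = (m * p ^ r + j / p).choose (j / p) := by rw [hmod, hdiv, Nat.choose_self, one_mul]
      _ ≡ 1 [MOD p] := ih m _ (Nat.div_lt_of_lt_mul (by rwa [← pow_succ']))

lemma Nat.cast_choose_mul_pow_add_eq_one (k : Type*) [Field k] {p : ℕ} [Fact p.Prime]
    [CharP k p] {r j : ℕ} (m : ℕ) (hj : j < p ^ r) : ((m * p ^ r + j).choose j : k) = 1 := by
  simpa using (CharP.natCast_eq_natCast k p).mpr (Nat.choose_mul_pow_add_modEq_one p r m j hj)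

theorem Fin.range_castSucc_eq_compl_last (n : ℕ) :
    Set.range (Fin.castSucc : Fin n → Fin (n + 1)) = {Fin.last n}ᶜ := by
  ext i
  simp [Fin.range_castSucc, Fin.ext_iff, Fin.val_last, Nat.lt_iff_le_and_ne, i.is_le]

lemma Submodule.restrictScalars_span_singleton_eq_of_smul_mem {k A V ι : Type*}
    [CommSemiring k] [Semiring A] [Algebra k A] [AddCommMonoid V] [Module A V] [Module k V]
    [IsScalarTower k A V] {e : ι → A} (he : span k (Set.range e) = ⊤) {v : V} (hv : ∀ i, e i • v ∈ k ∙ v) :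
    (A ∙ v).restrictScalars k = k ∙ v := by
  refine le_antisymm (fun x hx => ?_) (span_le_restrictScalars k A _)
  obtain ⟨a, rfl⟩ := mem_span_singleton.mp hx
  clear hx
  have ha : a ∈ span k (Set.range e) := he ▸ mem_top
  induction ha using span_induction with
  | mem _ h => obtain ⟨i, rfl⟩ := h; exact hv i
  | zero => simp
  | add _ _ _ _ h₁ h₂ => rw [add_smul]; exact add_mem h₁ h₂
  | smul c _ _ h => rw [smul_assoc]; exact smul_mem _ c h

lemma LinearMap.range_eq_span_image_of_comp_basis {R M N ι κ : Type*} [Semiring R]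
    [AddCommMonoid M] [AddCommMonoid N] [Module R M] [Module R N] (f : M →ₗ[R] N)
    (b : Module.Basis ι R M) {W : κ → N} {g : ι → κ} (h : f ∘ b = W ∘ g) :
    LinearMap.range f = span R (W '' Set.range g) := by
  rw [LinearMap.range_eq_map, ← b.span_eq, map_span, ← Set.range_comp, h, Set.range_comp]

theorem stmt_11_general (k : Type) [Field k] (p r n : ℕ) [Fact p.Prime] [CharP k p]
    (A : Type) [Ring A] [Algebra k A] (e : ℕ → A)
    (h0 : e 0 = 1)
    (hbasisA : LinearIndependent k (fun i : Fin (p ^ r) => e i) ∧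
      Submodule.span k (Set.range fun i : Fin (p ^ r) => e i) = ⊤)
    (V : Type) [AddCommGroup V] [Module A V] [Module k V] [IsScalarTower k A V]
    (w : ℕ → V)
    (hbasisV : LinearIndependent k (fun t : Fin (n * p ^ r + 1) => w t) ∧
      Submodule.span k (Set.range fun t : Fin (n * p ^ r + 1) => w t) = ⊤)
    (haction : ∀ j t : ℕ, j < p ^ r → t ≤ n * p ^ r →
      (if t + j ≤ n * p ^ r then
        e j • w t = (Nat.choose (t + j) j : k) • w (t + j)
      else e j • w t = 0)) :
    ∃ ψ : (Fin n → A) →ₗ[A] V,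
      Function.Injective ψ ∧
      (∀ i : Fin n, ψ (Pi.single i 1) = w ((i : ℕ) * p ^ r)) ∧
      ∃ v₀ : V, v₀ ≠ 0 ∧ (∀ j : ℕ, 1 ≤ j → j < p ^ r → e j • v₀ = 0) ∧
        IsCompl (LinearMap.range ψ) (Submodule.span A {v₀}) := by
  obtain ⟨hAli, hAsp⟩ := hbasisA
  obtain ⟨hVli, hVsp⟩ := hbasisV
  -- indices written as `j + p ^ r * i`, the form produced by `finProdFinEquiv`
  have hshift (i : Fin n) (j : Fin (p ^ r)) : e j • w (i * p ^ r) = w (j + p ^ r * i) := by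
    have hlt : (i : ℕ) * p ^ r + j < n * p ^ r := by nlinarith [i.is_lt, j.is_lt]
    have h := haction j (i * p ^ r) j.is_lt (by omega)
    rw [if_pos hlt.le, Nat.cast_choose_mul_pow_add_eq_one k i j.is_lt, one_smul] at h
    rw [h, add_comm, mul_comm]
  have hkill (j : ℕ) (hj₁ : 1 ≤ j) (hj : j < p ^ r) : e j • w (n * p ^ r) = 0 := by
    have h := haction j _ hj le_rfl
    rwa [if_neg (by omega)] at h
  let W : Fin (n * p ^ r + 1) → V := fun t => w t
  let bA : Module.Basis (Fin (p ^ r)) k A := .mk hAli hAsp.ge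
  let block : (Σ _ : Fin n, Fin (p ^ r)) ≃ Fin (n * p ^ r) :=
    (Equiv.sigmaEquivProd _ _).trans finProdFinEquiv
  let ψ := Fintype.linearCombination A fun i : Fin n => w (i * p ^ r)
  have hψ : ψ.restrictScalars k ∘ Pi.basis (fun _ => bA) = W ∘ Fin.castSucc ∘ block := by
    funext σ
    simp [ψ, bA, W, block, hshift]
  have hline : (A ∙ w (n * p ^ r)).restrictScalars k = span k (W '' {Fin.last _}) := by
    refine (restrictScalars_span_singleton_eq_of_smul_mem hAsp fun j => ?_).trans (by simp [W])
    rcases Nat.eq_zero_or_pos j with hj | hj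
    · simp [hj, h0, mem_span_singleton_self]
    · simp [hkill j hj j.is_lt]
  have hinj : Function.Injective ψ := by
    refine LinearMap.injective_of_linearIndependent (f := ψ.restrictScalars k)
      (Pi.basis fun _ : Fin n => bA).span_eq ?_
    rw [hψ]
    exact hVli.comp _ ((Fin.castSucc_injective _).comp block.injective)
  refine ⟨ψ, hinj, fun i => by simp [ψ], w (n * p ^ r),
    by simpa [W] using hVli.ne_zero (Fin.last _), hkill, ?_⟩
  rw [← isCompl_restrictScalars_iff k, ← LinearMap.range_restrictScalars,
    LinearMap.range_eq_span_image_of_comp_basis _ _ hψ, hline, Set.range_comp,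
    block.range_eq_univ, Set.image_univ, Fin.range_castSucc_eq_compl_last]
  exact hVli.isCompl_span_image hVsp isCompl_compl.symm

/-- `V(n·p^r)|_{U_r} ≅ k ⊕ (kU_r)^{⊕n}`: with `A = kU_r` the divided power
algebra (basis `e i`, `i < p^r`) and `V = V(np^r)` with basis `w 0, …, w (np^r)`
and action `e j • w t = C(t+j, j) • w (t+j)`, the `A`-linear map `ψ` from a free
module of rank `n` sending the `i`-th generator to `w (i·p^r)` is injective,
and its image has a complement spanned by a nonzero vector `v₀` on which all
`e j` (`j ≥ 1`) act by zero (the trivial module). -/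
theorem stmt_11 (k : Type) [Field k] (p r n : ℕ) [Fact p.Prime] [CharP k p]
    (hr : 1 ≤ r) (hn : 1 ≤ n)
    (A : Type) [Ring A] [Algebra k A] (e : ℕ → A)
    (h0 : e 0 = 1)
    (hmul : ∀ i j : ℕ, i + j < p ^ r →
      e i * e j = (Nat.choose (i + j) i : k) • e (i + j))
    (hmul' : ∀ i j : ℕ, i < p ^ r → j < p ^ r → p ^ r ≤ i + j → e i * e j = 0)
    (hbasisA : LinearIndependent k (fun i : Fin (p ^ r) => e i) ∧
      Submodule.span k (Set.range fun i : Fin (p ^ r) => e i) = ⊤)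
    (V : Type) [AddCommGroup V] [Module A V] [Module k V] [IsScalarTower k A V]
    (w : ℕ → V)
    (hbasisV : LinearIndependent k (fun t : Fin (n * p ^ r + 1) => w t) ∧
      Submodule.span k (Set.range fun t : Fin (n * p ^ r + 1) => w t) = ⊤)
    (haction : ∀ j t : ℕ, j < p ^ r → t ≤ n * p ^ r →
      (if t + j ≤ n * p ^ r then
        e j • w t = (Nat.choose (t + j) j : k) • w (t + j)
      else e j • w t = 0)) :
    ∃ ψ : (Fin n → A) →ₗ[A] V,
      Function.Injective ψ ∧
      (∀ i : Fin n, ψ (Pi.single i 1) = w ((i : ℕ) * p ^ r)) ∧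
      ∃ v₀ : V, v₀ ≠ 0 ∧ (∀ j : ℕ, 1 ≤ j → j < p ^ r → e j • v₀ = 0) ∧
        IsCompl (LinearMap.range ψ) (Submodule.span A {v₀}) :=
  stmt_11_general k p r n A e h0 hbasisA V w hbasisV haction
end
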